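/- Let L be a Hermitian operator on ℂ^d with 0 ⪯ L ⪯ I, let ψ ∈ ℂ^d be a unit vector with Lψ = ψ, let τ ≥ 1 be such that ⟨φ|L|φ⟩ ≤ 1 − 1/τ for every unit vector φ orthogonal to ψ, and let ρ be a density matrix on ℂ^d. Let m ≥ 1, ε > 0, δ ∈ (0,1), and let ω₁, …, ω_T be independent, identically distributed real random variables with E[ω₁] = tr(Lρ) and |ω_t| ≤ 2^{2m−1} almost surely. If T ≥ 2^{4m+3}·(τ²/ε²)·ln(2/δ) and the acceptance threshold is ω_threshold = 1 − (3ε)/(4τ), then: (i) if ⟨ψ|ρ|ψ⟩ < 1 − ε, the probability that (1/T)·Σ_t ω_t ≥ ω_threshold is at most δ; and (ii) if ⟨ψ|ρ|ψ⟩ ≥ 1 − ε/(2τ), the probability that (1/T)·Σ_t ω_t < ω_threshold is at most δ. -/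

import Mathlib

/-!
With `P = ψψ*`, the hypotheses on `L` say `P ≤ L ≤ P + (1 - 1/τ)(1 - P)` in the Loewner order.
Pairing with the density matrix `ρ` gives `F ≤ tr(Lρ) ≤ 1 - (1 - F)/τ` for the fidelity
`F = ⟨ψ|ρ|ψ⟩`, so in either regime the threshold `1 - 3ε/(4τ)` lies at distance at least
`ε/(4τ)` from the mean `tr(Lρ)` of the shadow overlaps, on the correct side. Hoeffding's
inequality for `T` samples bounded by `2^(2m-1)` bounds each error probability by
`exp(-Tε²/(2^(4m+3)τ²)) ≤ δ/2`.
-/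

open Matrix MeasureTheory ProbabilityTheory Real
open scoped ComplexOrder

namespace Matrix

open scoped MatrixOrder

variable {𝕜 n : Type*} [RCLike 𝕜] [Fintype n]

lemma star_dotProduct_self_eq_sum_norm_sq (v : n → 𝕜) :
    star v ⬝ᵥ v = ((∑ i, ‖v i‖ ^ 2 : ℝ) : 𝕜) := by
  simp [dotProduct, RCLike.conj_mul]

lemma IsHermitian.posSemidef_of_re_dotProduct_nonneg {M : Matrix n n 𝕜} (hM : M.IsHermitian)
    (h : ∀ x, 0 ≤ RCLike.re (star x ⬝ᵥ (M *ᵥ x))) : M.PosSemidef :=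
  .of_dotProduct_mulVec_nonneg hM fun x ↦
    RCLike.nonneg_iff.mpr ⟨h x, hM.im_star_dotProduct_mulVec_self x⟩

lemma PosSemidef.trace_mul_nonneg {A B : Matrix n n 𝕜} (hA : A.PosSemidef)
    (hB : B.PosSemidef) : 0 ≤ (A * B).trace := by
  classical
  obtain ⟨C, rfl⟩ : ∃ C : Matrix n n 𝕜, A = Cᴴ * C :=
    CStarAlgebra.nonneg_iff_eq_star_mul_self.mp hA.nonneg
  rw [← trace_mul_cycle]
  exact (hB.mul_mul_conjTranspose_same C).trace_nonneg

lemma trace_mul_le_trace_mul_of_le {A B ρ : Matrix n n 𝕜} (hAB : A ≤ B)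
    (hρ : ρ.PosSemidef) : (A * ρ).trace ≤ (B * ρ).trace := by
  have := PosSemidef.trace_mul_nonneg hAB hρ
  rwa [sub_mul, trace_sub, sub_nonneg] at this

variable {L ρ : Matrix n n 𝕜} {ψ : n → 𝕜}

lemma star_dotProduct_sub_smul_self (hψ : star ψ ⬝ᵥ ψ = 1) (x : n → 𝕜) :
    star ψ ⬝ᵥ (x - (star ψ ⬝ᵥ x) • ψ) = 0 := by
  rw [dotProduct_sub, dotProduct_smul, hψ, smul_eq_mul, mul_one, sub_self]

lemma star_dotProduct_mulVec_eq_of_mulVec_eq_self (hL : L.IsHermitian)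
    (hψ : star ψ ⬝ᵥ ψ = 1) (hLψ : L *ᵥ ψ = ψ) (x : n → 𝕜) :
    star x ⬝ᵥ (L *ᵥ x) =
      star (x - (star ψ ⬝ᵥ x) • ψ) ⬝ᵥ (L *ᵥ (x - (star ψ ⬝ᵥ x) • ψ)) +
        star (star ψ ⬝ᵥ x) * (star ψ ⬝ᵥ x) := by
  set c := star ψ ⬝ᵥ x
  set y := x - c • ψ
  have hψy : star ψ ⬝ᵥ y = 0 := star_dotProduct_sub_smul_self hψ x
  have hyψ : star y ⬝ᵥ ψ = 0 := by rw [star_dotProduct, hψy, star_zero]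
  have hψLy : star ψ ⬝ᵥ (L *ᵥ y) = 0 := by
    rw [dotProduct_mulVec, ← hL.eq, ← star_mulVec, hLψ, hψy]
  have hx : x = y + c • ψ := (sub_add_cancel x _).symm
  conv_lhs => rw [hx]
  simp only [star_add, star_smul, add_dotProduct, dotProduct_add, smul_dotProduct,
    dotProduct_smul, mulVec_add, mulVec_smul, hLψ, hψLy, hyψ, hψ, smul_eq_mul, mul_zero,
    zero_add, add_zero, mul_one]
  ring

lemma star_dotProduct_vecMulVec_mulVec (ψ x : n → 𝕜) :
    star x ⬝ᵥ (vecMulVec ψ (star ψ) *ᵥ x) = star (star ψ ⬝ᵥ x) * (star ψ ⬝ᵥ x) := by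
  rw [vecMulVec_mulVec, op_smul_eq_smul, dotProduct_smul, smul_eq_mul, star_dotProduct x ψ,
    mul_comm]

lemma trace_vecMulVec_mul (ψ : n → 𝕜) (ρ : Matrix n n 𝕜) :
    (vecMulVec ψ (star ψ) * ρ).trace = star ψ ⬝ᵥ (ρ *ᵥ ψ) := by
  rw [trace_mul_comm, mul_vecMulVec, trace_vecMulVec, dotProduct_comm]

lemma re_star_dotProduct_mulVec_le_of_forall_unit {κ : ℝ}
    (hgap : ∀ φ : n → 𝕜, ∑ i, ‖φ i‖ ^ 2 = 1 → star ψ ⬝ᵥ φ = 0 →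
      RCLike.re (star φ ⬝ᵥ (L *ᵥ φ)) ≤ κ)
    {y : n → 𝕜} (hy : star ψ ⬝ᵥ y = 0) :
    RCLike.re (star y ⬝ᵥ (L *ᵥ y)) ≤ κ * ∑ i, ‖y i‖ ^ 2 := by
  set r := ∑ i, ‖y i‖ ^ 2
  rcases (Finset.sum_nonneg fun i _ ↦ sq_nonneg ‖y i‖ : 0 ≤ r).eq_or_lt with hr | hr
  · have : y = 0 := by
      rw [← dotProduct_star_self_eq_zero, star_dotProduct_self_eq_sum_norm_sq, ← hr]
      simp
    simp [this, r]
  set s := Real.sqrt r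
  have hs : 0 < s := Real.sqrt_pos.mpr hr
  have hys : y = (s : 𝕜) • ((s⁻¹ : ℝ) : 𝕜) • y := by
    rw [smul_smul, ← RCLike.ofReal_mul, mul_inv_cancel₀ hs.ne', RCLike.ofReal_one, one_smul]
  have hunit : ∑ i, ‖(((s⁻¹ : ℝ) : 𝕜) • y) i‖ ^ 2 = 1 := by
    simp only [Pi.smul_apply, norm_smul, mul_pow, ← Finset.mul_sum, RCLike.norm_ofReal,
      abs_inv, abs_of_pos hs, inv_pow, s]
    rw [Real.sq_sqrt hr.le]
    exact inv_mul_cancel₀ hr.ne'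
  have hφ := hgap _ hunit (by rw [dotProduct_smul, hy, smul_zero])
  have hquad : star y ⬝ᵥ (L *ᵥ y) = ((s * s : ℝ) : 𝕜) *
      (star (((s⁻¹ : ℝ) : 𝕜) • y) ⬝ᵥ (L *ᵥ (((s⁻¹ : ℝ) : 𝕜) • y))) := by
    conv_lhs => rw [hys]
    simp only [star_smul, mulVec_smul, smul_dotProduct, dotProduct_smul, smul_eq_mul,
      RCLike.star_def, RCLike.conj_ofReal, RCLike.ofReal_mul]
    ring
  rw [hquad, RCLike.re_ofReal_mul, Real.mul_self_sqrt hr.le, mul_comm]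
  exact mul_le_mul_of_nonneg_right hφ hr.le

lemma vecMulVec_le_of_mulVec_eq_self (hL : L.PosSemidef) (hψ : star ψ ⬝ᵥ ψ = 1)
    (hLψ : L *ᵥ ψ = ψ) : vecMulVec ψ (star ψ) ≤ L := by
  refine .of_dotProduct_mulVec_nonneg
    (hL.isHermitian.sub (posSemidef_vecMulVec_self_star ψ).isHermitian) fun x ↦ ?_
  rw [sub_mulVec, dotProduct_sub,
    star_dotProduct_mulVec_eq_of_mulVec_eq_self hL.isHermitian hψ hLψ,
    star_dotProduct_vecMulVec_mulVec, add_sub_cancel_right]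
  exact hL.dotProduct_mulVec_nonneg _

lemma le_vecMulVec_add_smul_of_forall_unit [DecidableEq n] (hL : L.IsHermitian)
    (hψ : star ψ ⬝ᵥ ψ = 1) (hLψ : L *ᵥ ψ = ψ) {κ : ℝ}
    (hgap : ∀ φ : n → 𝕜, ∑ i, ‖φ i‖ ^ 2 = 1 → star ψ ⬝ᵥ φ = 0 →
      RCLike.re (star φ ⬝ᵥ (L *ᵥ φ)) ≤ κ) :
    L ≤ vecMulVec ψ (star ψ) + (κ : 𝕜) • (1 - vecMulVec ψ (star ψ)) := by
  have hP := (posSemidef_vecMulVec_self_star ψ).isHermitian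
  have hherm : (vecMulVec ψ (star ψ) + (κ : 𝕜) • (1 - vecMulVec ψ (star ψ))).IsHermitian :=
    hP.add ((isHermitian_one.sub hP).smul (RCLike.conj_ofReal κ))
  refine (hherm.sub hL).posSemidef_of_re_dotProduct_nonneg fun x ↦ ?_
  have hnorm := star_dotProduct_mulVec_eq_of_mulVec_eq_self isHermitian_one hψ (one_mulVec ψ) x
  simp only [one_mulVec] at hnorm
  rw [sub_mulVec, add_mulVec, smul_mulVec, sub_mulVec, one_mulVec, dotProduct_sub,
    dotProduct_add, dotProduct_smul, dotProduct_sub, star_dotProduct_vecMulVec_mulVec,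
    star_dotProduct_mulVec_eq_of_mulVec_eq_self hL hψ hLψ, hnorm,
    star_dotProduct_self_eq_sum_norm_sq]
  have hgap' :=
    re_star_dotProduct_mulVec_le_of_forall_unit hgap (star_dotProduct_sub_smul_self hψ x)
  simp only [add_sub_cancel_right, smul_eq_mul, map_sub, map_add, ← RCLike.ofReal_mul,
    RCLike.ofReal_re]
  linarith

lemma re_dotProduct_mulVec_le_re_trace_mul (hL : L.PosSemidef)
    (hψ : star ψ ⬝ᵥ ψ = 1) (hLψ : L *ᵥ ψ = ψ) (hρ : ρ.PosSemidef) :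
    RCLike.re (star ψ ⬝ᵥ (ρ *ᵥ ψ)) ≤ RCLike.re (L * ρ).trace := by
  have := trace_mul_le_trace_mul_of_le (vecMulVec_le_of_mulVec_eq_self hL hψ hLψ) hρ
  rw [trace_vecMulVec_mul] at this
  exact (RCLike.le_iff_re_im.mp this).1

lemma re_trace_mul_le_of_forall_unit [DecidableEq n] (hL : L.IsHermitian)
    (hψ : star ψ ⬝ᵥ ψ = 1) (hLψ : L *ᵥ ψ = ψ) {κ : ℝ}
    (hgap : ∀ φ : n → 𝕜, ∑ i, ‖φ i‖ ^ 2 = 1 → star ψ ⬝ᵥ φ = 0 →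
      RCLike.re (star φ ⬝ᵥ (L *ᵥ φ)) ≤ κ)
    (hρ : ρ.PosSemidef) (hρtr : ρ.trace = 1) :
    RCLike.re (L * ρ).trace ≤
      RCLike.re (star ψ ⬝ᵥ (ρ *ᵥ ψ)) + κ * (1 - RCLike.re (star ψ ⬝ᵥ (ρ *ᵥ ψ))) := by
  have := trace_mul_le_trace_mul_of_le (le_vecMulVec_add_smul_of_forall_unit hL hψ hLψ hgap) hρ
  rw [add_mul, smul_mul, sub_mul, one_mul, trace_add, trace_smul, trace_sub, hρtr,
    trace_vecMulVec_mul] at this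
  simpa only [smul_eq_mul, map_add, map_sub, RCLike.re_ofReal_mul, RCLike.one_re] using
    (RCLike.le_iff_re_im.mp this).1

end Matrix

namespace ProbabilityTheory

variable {Ω ι : Type*} [MeasurableSpace Ω] {μ : Measure Ω} [IsProbabilityMeasure μ]
  [Fintype ι] [Nonempty ι] {X : ι → Ω → ℝ} {m B a : ℝ}

lemma measureReal_mean_ge_le (hX : ∀ i, AEMeasurable (X i) μ) (hindep : iIndepFun X μ)
    (hm : ∀ i, μ[X i] = m) (hB : ∀ i, ∀ᵐ x ∂μ, |X i x| ≤ B) (ha : 0 ≤ a) :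
    μ.real {x | m + a ≤ (∑ i, X i x) / Fintype.card ι} ≤
      exp (-Fintype.card ι * a ^ 2 / (2 * B ^ 2)) := by
  set n : ℝ := (Fintype.card ι : ℝ)
  have hn : 0 < n := by positivity
  have hsubG : ∀ i ∈ Finset.univ,
      HasSubgaussianMGF (fun x ↦ X i x - m) ((‖B - -B‖₊ / 2) ^ 2) μ := fun i _ ↦ by
    rw [← hm i]
    exact hasSubgaussianMGF_of_mem_Icc (hX i) <| (hB i).mono fun x hx ↦ abs_le.mp hx
  have hcentered : iIndepFun (fun i x ↦ X i x - m) μ :=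
    hindep.comp (fun _ x ↦ x - m) fun _ ↦ measurable_sub_const m
  have hevent : {x | m + a ≤ (∑ i, X i x) / n} = {x | n * a ≤ ∑ i, (X i x - m)} := by
    ext x
    simp only [Set.mem_ofPred_eq, le_div_iff₀ hn, Finset.sum_sub_distrib, Finset.sum_const,
      Finset.card_univ, nsmul_eq_mul]
    constructor <;> intro h <;> linarith
  have hc : ((∑ _i : ι, (‖B - -B‖₊ / 2) ^ 2 : NNReal) : ℝ) = n * B ^ 2 := by
    push_cast
    rw [Finset.sum_const, Finset.card_univ, nsmul_eq_mul, sub_neg_eq_add, ← two_mul, norm_mul,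
      Real.norm_two, Real.norm_eq_abs, mul_div_cancel_left₀ _ two_ne_zero, sq_abs]
  calc μ.real {x | m + a ≤ (∑ i, X i x) / n}
      ≤ exp (-(n * a) ^ 2 / (2 * ((∑ _i : ι, (‖B - -B‖₊ / 2) ^ 2 : NNReal) : ℝ))) := by
        rw [hevent]
        exact HasSubgaussianMGF.measure_sum_ge_le_of_iIndepFun hcentered hsubG (by positivity)
    _ = exp (-n * a ^ 2 / (2 * B ^ 2)) := by
        rw [hc]
        congr 1
        field_simp

lemma measureReal_mean_le_le (hX : ∀ i, AEMeasurable (X i) μ) (hindep : iIndepFun X μ)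
    (hm : ∀ i, μ[X i] = m) (hB : ∀ i, ∀ᵐ x ∂μ, |X i x| ≤ B) (ha : 0 ≤ a) :
    μ.real {x | (∑ i, X i x) / Fintype.card ι ≤ m - a} ≤
      exp (-Fintype.card ι * a ^ 2 / (2 * B ^ 2)) := by
  have hevent : {x | (∑ i, X i x) / Fintype.card ι ≤ m - a} =
      {x | -m + a ≤ (∑ i, -X i x) / Fintype.card ι} := by
    ext x
    simp only [Set.mem_ofPred_eq, Finset.sum_neg_distrib, neg_div]
    constructor <;> intro h <;> linarith
  rw [hevent]
  exact measureReal_mean_ge_le (fun i ↦ (hX i).neg)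
    (hindep.comp (fun _ ↦ Neg.neg) fun _ ↦ measurable_neg)
    (fun i ↦ by rw [integral_neg, hm i])
    (fun i ↦ by simpa only [Pi.neg_apply, abs_neg] using hB i) ha

end ProbabilityTheory

lemma exp_neg_le_of_sample_size {m T : ℕ} (hm : 1 ≤ m) {ε τ δ : ℝ} (hε : 0 < ε) (hτ : 0 < τ)
    (hδ : 0 < δ) (hT : (T : ℝ) ≥ 2 ^ (4 * m + 3) * (τ ^ 2 / ε ^ 2) * log (2 / δ)) :
    exp (-T * (ε / (4 * τ)) ^ 2 / (2 * ((2 : ℝ) ^ (2 * m - 1)) ^ 2)) ≤ δ := by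
  -- `2 * m - 1` is truncated subtraction, hence `1 ≤ m`
  have hpow : ((2 : ℝ) ^ (2 * m - 1)) ^ 2 * 32 = 2 ^ (4 * m + 3) := by
    rw [← pow_mul, show 4 * m + 3 = (2 * m - 1) * 2 + 5 by omega, pow_add]
    norm_num
  have hlog : log (2 / δ) ≤ T * (ε / (4 * τ)) ^ 2 / (2 * ((2 : ℝ) ^ (2 * m - 1)) ^ 2) :=
    calc log (2 / δ)
        = 2 ^ (4 * m + 3) * (τ ^ 2 / ε ^ 2) * log (2 / δ) * (ε / (4 * τ)) ^ 2 /
            (2 * ((2 : ℝ) ^ (2 * m - 1)) ^ 2) := by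
          rw [← hpow]; field_simp; ring
      _ ≤ T * (ε / (4 * τ)) ^ 2 / (2 * ((2 : ℝ) ^ (2 * m - 1)) ^ 2) := by gcongr
  calc exp (-T * (ε / (4 * τ)) ^ 2 / (2 * ((2 : ℝ) ^ (2 * m - 1)) ^ 2))
      ≤ exp (-log (2 / δ)) := by
        rw [neg_mul, neg_div]; exact exp_le_exp.mpr (neg_le_neg hlog)
    _ = δ / 2 := by rw [exp_neg, exp_log (by positivity), inv_div]
    _ ≤ δ := by linarith

theorem original_protocol_completeness_soundness_general {d : ℕ}
    (L ρ : Matrix (Fin d) (Fin d) ℂ)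
    (hL0 : L.PosSemidef)
    (ψ : Fin d → ℂ) (hψ : ∑ i, ‖ψ i‖ ^ 2 = 1) (hLψ : L *ᵥ ψ = ψ)
    (τ : ℝ) (hτ : 1 ≤ τ)
    (hgap : ∀ φ : Fin d → ℂ, (∑ i, ‖φ i‖ ^ 2 = 1) → (star ψ ⬝ᵥ φ = 0) →
      (star φ ⬝ᵥ (L *ᵥ φ)).re ≤ 1 - 1 / τ)
    (hρ : ρ.PosSemidef) (hρtr : ρ.trace = 1)
    {Ω : Type*} [MeasurableSpace Ω] (μ : Measure Ω) [IsProbabilityMeasure μ]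
    (m T : ℕ) (hm : 1 ≤ m) (ε δ : ℝ) (hε : 0 < ε) (hδ : δ ∈ Set.Ioo (0 : ℝ) 1)
    (ω : Fin T → Ω → ℝ) (hmeas : ∀ t, Measurable (ω t))
    (hindep : iIndepFun ω μ)
    (hmean : ∀ t, ∫ x, ω t x ∂μ = ((L * ρ).trace).re)
    (hbound : ∀ t, ∀ᵐ x ∂μ, |ω t x| ≤ 2 ^ (2 * m - 1))
    (hT : (T : ℝ) ≥ 2 ^ (4 * m + 3) * (τ ^ 2 / ε ^ 2) * Real.log (2 / δ)) :
    ((star ψ ⬝ᵥ (ρ *ᵥ ψ)).re < 1 - ε →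
      μ {x | (∑ t, ω t x) / T ≥ 1 - 3 * ε / (4 * τ)} ≤ ENNReal.ofReal δ) ∧
    ((star ψ ⬝ᵥ (ρ *ᵥ ψ)).re ≥ 1 - ε / (2 * τ) →
      μ {x | (∑ t, ω t x) / T < 1 - 3 * ε / (4 * τ)} ≤ ENNReal.ofReal δ) := by
  set F := (star ψ ⬝ᵥ (ρ *ᵥ ψ)).re
  have hψ1 : star ψ ⬝ᵥ ψ = 1 := by
    rw [star_dotProduct_self_eq_sum_norm_sq, hψ, RCLike.ofReal_one]
  have hF_le : F ≤ ((L * ρ).trace).re := re_dotProduct_mulVec_le_re_trace_mul hL0 hψ1 hLψ hρ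
  have hle_F : ((L * ρ).trace).re ≤ F + (1 - 1 / τ) * (1 - F) :=
    re_trace_mul_le_of_forall_unit hL0.isHermitian hψ1 hLψ hgap hρ hρtr
  have hτ0 : 0 < τ := by linarith
  have hexp := exp_neg_le_of_sample_size hm hε hτ0 hδ.1 hT
  have : Nonempty (Fin T) :=
    ⟨⟨0, Nat.pos_of_ne_zero fun hT0 ↦ by simp [hT0] at hexp; linarith [hδ.2]⟩⟩
  have hupper := measureReal_mean_ge_le (fun t ↦ (hmeas t).aemeasurable) hindep hmean hbound
    (a := ε / (4 * τ)) (by positivity)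
  have hlower := measureReal_mean_le_le (fun t ↦ (hmeas t).aemeasurable) hindep hmean hbound
    (a := ε / (4 * τ)) (by positivity)
  rw [Fintype.card_fin] at hupper hlower
  have h4 : ε / (4 * τ) = ε / τ / 4 := by ring
  have h3 : 3 * ε / (4 * τ) = 3 * (ε / τ) / 4 := by ring
  refine ⟨fun hlow ↦ ?_, fun hhigh ↦ ?_⟩
  · have hετ : ε / τ ≤ (1 - F) / τ := by gcongr; linarith
    have hκ : F + (1 - 1 / τ) * (1 - F) = 1 - (1 - F) / τ := by ring
    refine (ENNReal.le_ofReal_iff_toReal_le (measure_ne_top _ _) hδ.1.le).mpr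
      ((measureReal_mono fun x hx ↦ ?_).trans (hupper.trans hexp))
    simp only [Set.mem_ofPred_eq] at hx ⊢
    linarith
  · have h2 : ε / (2 * τ) = ε / τ / 2 := by ring
    refine (ENNReal.le_ofReal_iff_toReal_le (measure_ne_top _ _) hδ.1.le).mpr
      ((measureReal_mono fun x hx ↦ ?_).trans (hlower.trans hexp))
    simp only [Set.mem_ofPred_eq] at hx ⊢
    linarith

/-- Corrected completeness and soundness of the original level-`m` shadow overlap certification
protocol: with `T ≥ 2^(4m+3)·(τ²/ε²)·ln(2/δ)` iid samples of the single-trial shadow overlap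
(mean `tr(Lρ)`, bounded by `2^(2m-1)`) and threshold `1 − 3ε/(4τ)`, low-fidelity states are
rejected and high-fidelity states are accepted, except with probability `δ`. -/
theorem original_protocol_completeness_soundness {d : ℕ}
    (L ρ : Matrix (Fin d) (Fin d) ℂ)
    (hL : L.IsHermitian) (hL0 : L.PosSemidef)
    (hL1 : ((1 : Matrix (Fin d) (Fin d) ℂ) - L).PosSemidef)
    (ψ : Fin d → ℂ) (hψ : ∑ i, ‖ψ i‖ ^ 2 = 1) (hLψ : L *ᵥ ψ = ψ)
    (τ : ℝ) (hτ : 1 ≤ τ)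
    (hgap : ∀ φ : Fin d → ℂ, (∑ i, ‖φ i‖ ^ 2 = 1) → (star ψ ⬝ᵥ φ = 0) →
      (star φ ⬝ᵥ (L *ᵥ φ)).re ≤ 1 - 1 / τ)
    (hρ : ρ.PosSemidef) (hρtr : ρ.trace = 1)
    {Ω : Type*} [MeasurableSpace Ω] (μ : Measure Ω) [IsProbabilityMeasure μ]
    (m T : ℕ) (hm : 1 ≤ m) (ε δ : ℝ) (hε : 0 < ε) (hδ : δ ∈ Set.Ioo (0 : ℝ) 1)
    (ω : Fin T → Ω → ℝ) (hmeas : ∀ t, Measurable (ω t))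
    (hindep : iIndepFun ω μ)
    (hident : ∀ t t', Measure.map (ω t) μ = Measure.map (ω t') μ)
    (hmean : ∀ t, ∫ x, ω t x ∂μ = ((L * ρ).trace).re)
    (hbound : ∀ t, ∀ᵐ x ∂μ, |ω t x| ≤ 2 ^ (2 * m - 1))
    (hT : (T : ℝ) ≥ 2 ^ (4 * m + 3) * (τ ^ 2 / ε ^ 2) * Real.log (2 / δ)) :
    ((star ψ ⬝ᵥ (ρ *ᵥ ψ)).re < 1 - ε →
      μ {x | (∑ t, ω t x) / T ≥ 1 - 3 * ε / (4 * τ)} ≤ ENNReal.ofReal δ) ∧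
    ((star ψ ⬝ᵥ (ρ *ᵥ ψ)).re ≥ 1 - ε / (2 * τ) →
      μ {x | (∑ t, ω t x) / T < 1 - 3 * ε / (4 * τ)} ≤ ENNReal.ofReal δ) :=
  original_protocol_completeness_soundness_general L ρ hL0 ψ hψ hLψ τ hτ hgap hρ hρtr μ m T hm ε δ
    hε hδ ω hmeas hindep hmean hbound hT
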